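/- arXiv:1508.00947 — 5 statements merged into one kernel-verified Lean document; each statement's English description precedes it below -/
import Mathlib

section
/- Let $U_k \sim \chi^2_p$ and $V_k \sim \chi^2_{n+p}$ be independent random variables (independent across $k$), let $C > 0$, and define the Markov chain $\sigma^2_k = (\sigma^2_{k-1} U_k + C)/V_k$ with stationary distribution $\mathrm{InverseGamma}(n/2, C/2)$ (requiring $n \ge 5$). Then the function $\psi(\sigma^2) = \sigma^2 - C/(n-2)$ satisfies $E[\psi(\sigma^2_k) \mid \sigma^2_{k-1}] = \frac{p}{n+p-2}\,\psi(\sigma^2_{k-1})$, i.e., $\psi$ is an eigenfunction of the forward operator with eigenvalue $p/(n+p-2)$. -/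
/-!
By independence, `E[(s U + C) / V] = (s E[U] + C) E[V⁻¹]`. Both moments are gamma moments: on
`x > 0` the density of `Gamma(a, r)` times `x ^ t` is `Γ(a + t) / (Γ(a) r ^ t)` times the density
of `Gamma(a + t, r)`, so `E[X ^ t] = Γ(a + t) / (Γ(a) r ^ t)`; this gives `E[U] = p` and
`E[V⁻¹] = 1 / (n + p - 2)`. The eigenvalue equation is then the identity
`C / (n + p - 2) - C / (n - 2) = -p C / ((n + p - 2) (n - 2))`.
-/

open MeasureTheory ProbabilityTheory

noncomputable def chiSqMeasure (d : ℕ) : Measure ℝ :=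
  gammaMeasure ((d : ℝ) / 2) (1 / 2)

open Real Set

namespace ProbabilityTheory

section GammaMoments

variable {a r : ℝ}

lemma integrable_gammaMeasure_iff (ha : 0 < a) (hr : 0 < r) {g : ℝ → ℝ} :
    Integrable g (gammaMeasure a r) ↔ Integrable (fun x ↦ gammaPDFReal a r x * g x) := by
  rw [gammaMeasure, integrable_withDensity_iff_integrable_smul' (f := gammaPDF a r)
    (measurable_gammaPDFReal a r).ennreal_ofReal (ae_of_all _ fun _ ↦ ENNReal.ofReal_lt_top)]
  simp only [gammaPDF, ENNReal.toReal_ofReal (gammaPDFReal_nonneg ha hr _), smul_eq_mul]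

lemma integral_gammaMeasure (ha : 0 < a) (hr : 0 < r) (g : ℝ → ℝ) :
    ∫ x, g x ∂gammaMeasure a r = ∫ x, gammaPDFReal a r x * g x := by
  rw [gammaMeasure, integral_withDensity_eq_integral_toReal_smul (f := gammaPDF a r)
    (measurable_gammaPDFReal a r).ennreal_ofReal (ae_of_all _ fun _ ↦ ENNReal.ofReal_lt_top)]
  simp only [gammaPDF, ENNReal.toReal_ofReal (gammaPDFReal_nonneg ha hr _), smul_eq_mul]

lemma integrable_gammaPDFReal (ha : 0 < a) (hr : 0 < r) : Integrable (gammaPDFReal a r) := by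
  have := isProbabilityMeasure_gammaMeasure ha hr
  simpa using (integrable_gammaMeasure_iff ha hr).1 (integrable_const (1 : ℝ))

lemma integral_gammaPDFReal (ha : 0 < a) (hr : 0 < r) : ∫ x, gammaPDFReal a r x = 1 := by
  have := isProbabilityMeasure_gammaMeasure ha hr
  simpa using (integral_gammaMeasure ha hr fun _ ↦ (1 : ℝ)).symm

lemma gammaPDFReal_mul_rpow {t x : ℝ} (hr : 0 < r) (hat : 0 < a + t) (hx : x ≠ 0) :
    gammaPDFReal a r x * x ^ t = Gamma (a + t) / (Gamma a * r ^ t) * gammaPDFReal (a + t) r x := by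
  rcases hx.lt_or_gt with hx | hx
  · simp [gammaPDFReal, hx.not_ge]
  · have hG : Gamma (a + t) ≠ 0 := (Gamma_pos_of_pos hat).ne'
    simp only [gammaPDFReal, if_pos hx.le]
    rw [show a + t - 1 = (a - 1) + t by ring, rpow_add hx, rpow_add hr]
    field_simp

lemma integrable_rpow_gammaMeasure {t : ℝ} (ha : 0 < a) (hr : 0 < r) (hat : 0 < a + t) :
    Integrable (fun x ↦ x ^ t) (gammaMeasure a r) := by
  rw [integrable_gammaMeasure_iff ha hr]
  refine ((integrable_gammaPDFReal hat hr).const_mul (Gamma (a + t) / (Gamma a * r ^ t))).congr ?_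
  filter_upwards [volume.ae_ne 0] with x hx
  exact (gammaPDFReal_mul_rpow hr hat hx).symm

lemma integral_rpow_gammaMeasure {t : ℝ} (ha : 0 < a) (hr : 0 < r) (hat : 0 < a + t) :
    ∫ x, x ^ t ∂gammaMeasure a r = Gamma (a + t) / (Gamma a * r ^ t) := by
  rw [integral_gammaMeasure ha hr, integral_congr_ae (g := fun x ↦ _ * gammaPDFReal (a + t) r x),
    integral_const_mul, integral_gammaPDFReal hat hr, mul_one]
  filter_upwards [volume.ae_ne 0] with x hx
  exact gammaPDFReal_mul_rpow hr hat hx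

lemma integrable_id_gammaMeasure (ha : 0 < a) (hr : 0 < r) :
    Integrable (fun x ↦ x) (gammaMeasure a r) := by
  simpa using integrable_rpow_gammaMeasure (t := 1) ha hr (by linarith)

lemma integrable_inv_gammaMeasure (ha : 1 < a) (hr : 0 < r) :
    Integrable (fun x ↦ x⁻¹) (gammaMeasure a r) := by
  simpa [rpow_neg_one] using
    integrable_rpow_gammaMeasure (a := a) (t := -1) (by linarith) hr (by linarith)

lemma integral_id_gammaMeasure (ha : 0 < a) (hr : 0 < r) :
    ∫ x, x ∂gammaMeasure a r = a / r := by
  have h := integral_rpow_gammaMeasure (t := 1) ha hr (by linarith)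
  simp only [rpow_one, Gamma_add_one ha.ne'] at h
  rw [h]
  field_simp [(Gamma_pos_of_pos ha).ne']

lemma integral_inv_gammaMeasure (ha : 1 < a) (hr : 0 < r) :
    ∫ x, x⁻¹ ∂gammaMeasure a r = r / (a - 1) := by
  have h := integral_rpow_gammaMeasure (a := a) (t := -1) (by linarith) hr (by linarith)
  have hGa : Gamma a = (a - 1) * Gamma (a - 1) := by
    simpa using Gamma_add_one (s := a - 1) (by linarith)
  simp only [rpow_neg_one, ← sub_eq_add_neg, hGa] at h
  rw [h]
  field_simp [(Gamma_pos_of_pos (sub_pos.2 ha)).ne']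

end GammaMoments

section ChiSquared

variable {d : ℕ}

lemma isProbabilityMeasure_chiSqMeasure (hd : 0 < d) : IsProbabilityMeasure (chiSqMeasure d) :=
  isProbabilityMeasure_gammaMeasure (by positivity) (by norm_num)

lemma integrable_id_chiSqMeasure (hd : 0 < d) : Integrable (fun x ↦ x) (chiSqMeasure d) :=
  integrable_id_gammaMeasure (by positivity) (by norm_num)

lemma integral_id_chiSqMeasure (hd : 0 < d) : ∫ x, x ∂chiSqMeasure d = d := by
  rw [chiSqMeasure, integral_id_gammaMeasure (by positivity) (by norm_num)]
  ring

lemma integrable_inv_chiSqMeasure (hd : 2 < d) : Integrable (fun x ↦ x⁻¹) (chiSqMeasure d) := by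
  have : (2 : ℝ) < d := by exact_mod_cast hd
  exact integrable_inv_gammaMeasure (by linarith) (by norm_num)

lemma integral_inv_chiSqMeasure (hd : 2 < d) : ∫ x, x⁻¹ ∂chiSqMeasure d = 1 / ((d : ℝ) - 2) := by
  have : (2 : ℝ) < d := by exact_mod_cast hd
  rw [chiSqMeasure, integral_inv_gammaMeasure (by linarith) (by norm_num)]
  field_simp

end ChiSquared

section Independence

variable {Ω 𝓧 : Type*} {mΩ : MeasurableSpace Ω} {m𝓧 : MeasurableSpace 𝓧} {μ : Measure Ω}

lemma hasLaw_of_map_eq {X : Ω → 𝓧} {ν : Measure 𝓧} [NeZero ν] (h : μ.map X = ν) :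
    HasLaw X ν μ :=
  ⟨aemeasurable_of_map_neZero (h ▸ ‹_›), h⟩

lemma HasLaw.integrable_comp {X : Ω → 𝓧} {ν : Measure 𝓧} (hX : HasLaw X ν μ) {f : 𝓧 → ℝ}
    (hf : Integrable f ν) : Integrable (fun ω ↦ f (X ω)) μ := by
  rw [← hX.map_eq] at hf
  exact (integrable_map_measure hf.aestronglyMeasurable hX.aemeasurable).1 hf

variable {X Y : Ω → ℝ}

lemma IndepFun.integrable_div (hXY : IndepFun X Y μ) (hX : Integrable X μ)
    (hY : Integrable (fun ω ↦ (Y ω)⁻¹) μ) : Integrable (fun ω ↦ X ω / Y ω) μ := by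
  have hXY' : IndepFun X (fun ω ↦ (Y ω)⁻¹) μ := hXY.comp measurable_id measurable_inv
  simp_rw [div_eq_mul_inv]
  exact hXY'.integrable_mul hX hY

lemma IndepFun.integral_div (hXY : IndepFun X Y μ) (hX : Integrable X μ)
    (hY : Integrable (fun ω ↦ (Y ω)⁻¹) μ) :
    ∫ ω, X ω / Y ω ∂μ = (∫ ω, X ω ∂μ) * ∫ ω, (Y ω)⁻¹ ∂μ := by
  have hXY' : IndepFun X (fun ω ↦ (Y ω)⁻¹) μ := hXY.comp measurable_id measurable_inv
  simpa only [div_eq_mul_inv] using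
    hXY'.integral_fun_mul_eq_mul_integral hX.aestronglyMeasurable hY.aestronglyMeasurable

end Independence

end ProbabilityTheory

theorem regression_gibbs_eigenfunction_general
    {Ω : Type*} [MeasurableSpace Ω] (μ : Measure Ω) [IsProbabilityMeasure μ]
    (n p : ℕ) (hn : 5 ≤ n) (hp : 1 ≤ p) (C : ℝ)
    (U V : Ω → ℝ)
    (hU : μ.map U = chiSqMeasure p)
    (hV : μ.map V = chiSqMeasure (n + p))
    (hUV : IndepFun U V μ) :
    ∀ s : ℝ, 0 < s →
      ∫ ω, ((s * U ω + C) / V ω - C / ((n : ℝ) - 2)) ∂μ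
        = ((p : ℝ) / ((n : ℝ) + (p : ℝ) - 2)) * (s - C / ((n : ℝ) - 2)) := by
  intro s _
  have hnp : 2 < n + p := by omega
  have hU_prob := isProbabilityMeasure_chiSqMeasure hp
  have hV_prob := isProbabilityMeasure_chiSqMeasure (d := n + p) (by omega)
  have hU_law := hasLaw_of_map_eq hU
  have hV_law := hasLaw_of_map_eq hV
  have hU_int := hU_law.integrable_comp (integrable_id_chiSqMeasure hp)
  have hV_inv := hV_law.integrable_comp (integrable_inv_chiSqMeasure hnp)
  have hX_int : Integrable (fun ω ↦ s * U ω + C) μ := (hU_int.const_mul s).add (integrable_const C)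
  have hXV : IndepFun (fun ω ↦ s * U ω + C) V μ :=
    hUV.comp (φ := fun x ↦ s * x + C) (by fun_prop) measurable_id
  have hEV : ∫ ω, (V ω)⁻¹ ∂μ = 1 / (((n + p : ℕ) : ℝ) - 2) :=
    (hV_law.integral_comp (f := fun x ↦ x⁻¹) measurable_inv.aestronglyMeasurable).trans
      (integral_inv_chiSqMeasure hnp)
  rw [integral_sub (hXV.integrable_div hX_int hV_inv) (integrable_const _),
    hXV.integral_div hX_int hV_inv, integral_add (hU_int.const_mul s) (integrable_const C),
    integral_const_mul, hU_law.integral_eq, integral_id_chiSqMeasure hp, hEV]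
  have hn2 : (n : ℝ) - 2 ≠ 0 := sub_ne_zero.2 (by norm_cast; omega)
  have hnp2 : (n : ℝ) + p - 2 ≠ 0 := sub_ne_zero.2 (by norm_cast; omega)
  simp only [integral_const, probReal_univ, one_smul, Nat.cast_add]
  field_simp
  ring

/-- For the marginal `σ²`-chain of the standard Bayesian regression Gibbs
sampler, `σ²_k = (σ²_{k-1} U_k + C) / V_k` with independent `U_k ~ χ²_p`, `V_k ~ χ²_{n+p}`,
the function `ψ(σ²) = σ² - C/(n-2)` is an eigenfunction of the forward operator with
eigenvalue `p/(n+p-2)`: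
`E[ψ(σ²_k) | σ²_{k-1} = s] = (p/(n+p-2)) ψ(s)`. -/
theorem regression_gibbs_eigenfunction
    {Ω : Type*} [MeasurableSpace Ω] (μ : Measure Ω) [IsProbabilityMeasure μ]
    (n p : ℕ) (hn : 5 ≤ n) (hp : 1 ≤ p) (C : ℝ) (hC : 0 < C)
    (U V : Ω → ℝ)
    (hU : μ.map U = chiSqMeasure p)
    (hV : μ.map V = chiSqMeasure (n + p))
    (hUV : IndepFun U V μ) :
    ∀ s : ℝ, 0 < s →
      ∫ ω, ((s * U ω + C) / V ω - C / ((n : ℝ) - 2)) ∂μ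
        = ((p : ℝ) / ((n : ℝ) + (p : ℝ) - 2)) * (s - C / ((n : ℝ) - 2)) :=
  regression_gibbs_eigenfunction_general μ n p hn hp C U V hU hV hUV
end

section
/- Fix $\epsilon > 0$ and constants $0 < m_1 \le m_2$ with $\epsilon < m_1$. Suppose a sequence of Markov chains satisfies $m_1 r_n^k \le d_k^{(n)} \le m_2 r_n^k$ for all $k, n$, where $r_n = p_n/(n+p_n-2)$ and $d_k^{(n)}$ is the distance to stationarity after $k$ iterations. Define $K_{n,\epsilon} = \inf\{K : d_k^{(n)} \le \epsilon \text{ for all } k \ge K\}$. Then $K_{n,\epsilon} = O(1)$ as $n \to \infty$ if and only if $p_n = O(n)$. -/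
/-- let `d n k` be the distance to stationarity of the `n`-th chain after
`k` iterations, sandwiched as `m₁ r_n^k ≤ d n k ≤ m₂ r_n^k` with
`r_n = p_n/(n+p_n-2)` and `0 < ε < m₁ ≤ m₂`.  With
`K_{n,ε} = inf {K : d n k ≤ ε for all k ≥ K}`, we have `K_{n,ε} = O(1)` as `n → ∞`
if and only if `p_n = O(n)`. -/
theorem iterations_bounded_iff_linear_dimension
    (p : ℕ → ℕ) (hp : ∀ n, 1 ≤ p n)
    (d : ℕ → ℕ → ℝ) (ε m₁ m₂ : ℝ)
    (hε : 0 < ε) (hεm : ε < m₁) (hm : m₁ ≤ m₂)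
    (hd : ∀ n k : ℕ, 5 ≤ n →
      m₁ * ((p n : ℝ) / ((n : ℝ) + (p n : ℝ) - 2)) ^ k ≤ d n k ∧
      d n k ≤ m₂ * ((p n : ℝ) / ((n : ℝ) + (p n : ℝ) - 2)) ^ k) :
    (∃ B : ℕ, ∀ n : ℕ, 5 ≤ n →
        sInf {K : ℕ | ∀ k : ℕ, K ≤ k → d n k ≤ ε} ≤ B) ↔
      (∃ K : ℝ, ∀ n : ℕ, 5 ≤ n → (p n : ℝ) ≤ K * (n : ℝ)) := by
  have hm₁ : (0:ℝ) < m₁ := hε.trans hεm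
  have hm₂ : (0:ℝ) < m₂ := hm₁.trans_le hm
  -- basic facts about r n
  have hD : ∀ n : ℕ, 5 ≤ n → (0:ℝ) < (n : ℝ) + (p n : ℝ) - 2 := by
    intro n hn
    have h1 : (5:ℝ) ≤ (n:ℝ) := by exact_mod_cast hn
    have h2 : (1:ℝ) ≤ (p n : ℝ) := by exact_mod_cast hp n
    linarith
  have hr0 : ∀ n : ℕ, 5 ≤ n → (0:ℝ) ≤ (p n : ℝ) / ((n : ℝ) + (p n : ℝ) - 2) := by
    intro n hn
    exact div_nonneg (Nat.cast_nonneg _) (hD n hn).le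
  have hr1 : ∀ n : ℕ, 5 ≤ n → (p n : ℝ) / ((n : ℝ) + (p n : ℝ) - 2) < 1 := by
    intro n hn
    rw [div_lt_one (hD n hn)]
    have h1 : (5:ℝ) ≤ (n:ℝ) := by exact_mod_cast hn
    linarith
  constructor
  · rintro ⟨B, hB⟩
    set c : ℝ := ε / m₁ with hcdef
    have hc0 : 0 < c := div_pos hε hm₁
    have hc1 : c < 1 := (div_lt_one hm₁).mpr hεm
    -- for each n ≥ 5, d n B ≤ ε
    have key : ∀ n, 5 ≤ n → ((p n : ℝ) / ((n : ℝ) + (p n : ℝ) - 2)) ^ B ≤ c := by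
      intro n hn
      set r : ℝ := (p n : ℝ) / ((n : ℝ) + (p n : ℝ) - 2) with hrdef
      obtain ⟨k₀, hk₀⟩ := exists_pow_lt_of_lt_one (div_pos hε hm₂) (hr1 n hn)
      have hSne : ({K : ℕ | ∀ k : ℕ, K ≤ k → d n k ≤ ε}).Nonempty := by
        refine ⟨k₀, fun k hk => ?_⟩
        have h1 := (hd n k hn).2
        have h2 : r ^ k ≤ r ^ k₀ := pow_le_pow_of_le_one (hr0 n hn) (hr1 n hn).le hk
        have h3 : m₂ * r ^ k₀ ≤ ε := by
          rw [← le_div_iff₀' hm₂]; exact hk₀.le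
        nlinarith
      have hmem := Nat.sInf_mem hSne
      have hBmem : d n B ≤ ε := hmem B (hB n hn)
      have h1 := (hd n B hn).1
      rw [hcdef, le_div_iff₀ hm₁, mul_comm]
      linarith
    -- B ≠ 0
    have hB0 : B ≠ 0 := by
      intro h
      have := key 5 (le_refl 5)
      rw [h, pow_zero] at this
      rw [hcdef, le_div_iff₀ hm₁] at this
      linarith
    set c' : ℝ := c ^ ((B:ℝ)⁻¹) with hc'def
    have hc'0 : 0 ≤ c' := Real.rpow_nonneg hc0.le _
    have hc'1 : c' < 1 := by
      apply Real.rpow_lt_one hc0.le hc1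
      positivity
    have hc'pow : c' ^ B = c := by
      rw [hc'def, ← Real.rpow_natCast (c ^ ((B:ℝ)⁻¹)) B, ← Real.rpow_mul hc0.le,
        inv_mul_cancel₀ (by exact_mod_cast hB0), Real.rpow_one]
    refine ⟨c' / (1 - c'), fun n hn => ?_⟩
    have hrc' : (p n : ℝ) / ((n : ℝ) + (p n : ℝ) - 2) ≤ c' := by
      by_contra h
      push_neg at h
      have := pow_lt_pow_left₀ h hc'0 hB0
      rw [hc'pow] at this
      exact absurd (key n hn) (not_le.mpr this)
    rw [div_le_iff₀ (hD n hn)] at hrc'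
    rw [div_mul_eq_mul_div, le_div_iff₀ (by linarith)]
    have h1 : (5:ℝ) ≤ (n:ℝ) := by exact_mod_cast hn
    nlinarith
  · rintro ⟨K, hK⟩
    set K' : ℝ := max K 1 with hK'def
    have hK'1 : (1:ℝ) ≤ K' := le_max_right _ _
    set ρ : ℝ := 1 - 3 / (5 * (K' + 1)) with hρdef
    have hρ0 : 0 ≤ ρ := by
      have : 3 / (5 * (K' + 1)) ≤ 3 / 10 := by
        apply div_le_div_of_nonneg_left (by norm_num) (by norm_num) (by linarith)
      rw [hρdef]; linarith
    have hρ1 : ρ < 1 := by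
      have : 0 < 3 / (5 * (K' + 1)) := by positivity
      rw [hρdef]; linarith
    obtain ⟨B, hB⟩ := exists_pow_lt_of_lt_one (div_pos hε hm₂) hρ1
    refine ⟨B, fun n hn => ?_⟩
    apply Nat.sInf_le
    intro k hk
    set r : ℝ := (p n : ℝ) / ((n : ℝ) + (p n : ℝ) - 2) with hrdef
    have hrρ : r ≤ ρ := by
      rw [hrdef, div_le_iff₀ (hD n hn)]
      have h1 : (5:ℝ) ≤ (n:ℝ) := by exact_mod_cast hn
      have h2 : (1:ℝ) ≤ (p n : ℝ) := by exact_mod_cast hp n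
      have h3 : (p n : ℝ) ≤ K' * n := le_trans (hK n hn)
        (mul_le_mul_of_nonneg_right (le_max_left _ _) (by linarith))
      have h4 : (0:ℝ) < 5 * (K' + 1) := by linarith
      rw [hρdef, sub_mul, one_mul, div_mul_eq_mul_div]
      have h5 : 3 * ((n:ℝ) + (p n : ℝ) - 2) / (5 * (K' + 1)) ≤ (n:ℝ) - 2 := by
        rw [div_le_iff₀ h4]
        nlinarith [mul_nonneg (by linarith : (0:ℝ) ≤ K' + 1)
          (by linarith : (0:ℝ) ≤ 2 * (n:ℝ) - 10)]
      linarith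
    have h1 := (hd n k hn).2
    have h2 : r ^ k ≤ ρ ^ k := pow_le_pow_left₀ (hr0 n hn) hrρ k
    have h3 : ρ ^ k ≤ ρ ^ B := pow_le_pow_of_le_one hρ0 hρ1.le hk
    have h4 : m₂ * ρ ^ B ≤ ε := by
      rw [← le_div_iff₀' hm₂]; exact hB.le
    nlinarith
end

section
/- For the Markov chain on $[0,1)$ defined by $\eta_k = W_k/(W_k + 1 - \eta_{k-1})$ where $W_k \sim \mathrm{BetaPrime}(p/2, (n+p)/2)$ are i.i.d., the stationary distribution is $\mathrm{Beta}(p/2, n/2)$. -/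
open MeasureTheory ProbabilityTheory

/-- The Beta(a, b) distribution on `(0,1)`, defined via its density. -/
noncomputable def betaMeasure' (a b : ℝ) : Measure ℝ :=
  volume.withDensity fun x =>
    ENNReal.ofReal (if x ∈ Set.Ioo (0 : ℝ) 1 then
      Real.Gamma (a + b) / (Real.Gamma a * Real.Gamma b) *
        x ^ (a - 1) * (1 - x) ^ (b - 1) else 0)

/-- The BetaPrime(a, b) distribution on `(0,∞)`, defined via its density. -/
noncomputable def betaPrimeMeasure (a b : ℝ) : Measure ℝ :=
  volume.withDensity fun w =>
    ENNReal.ofReal (if 0 < w then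
      Real.Gamma (a + b) / (Real.Gamma a * Real.Gamma b) *
        w ^ (a - 1) * (1 + w) ^ (-(a + b)) else 0)

/-!
Given `η = e`, the variable `W / (W + 1 - e)` is the image of `W ~ BetaPrime(α, α + β)` under
the bijection `w ↦ w / (w + 1 - e)` of `(0, ∞)` onto `(0, 1)`, so it has the density
`k(e, u) = (1 - e) / (1 - u)² · f_W((1 - e) u / (1 - u))` (`etaTransitionDensity`). By Tonelli
the new state has density `u ↦ ∫ f_η(e) k(e, u) de`, and the substitution
`e = t / (1 - u (1 - t))` turns this integrand into `f_{Beta(α, β)}(u) · f_{Beta(α, α + β)}(t)`,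
whose `t`-integral is `1`.
-/

open Set
open scoped ENNReal

lemma lintegral_map_prod_withDensity {X Y Z : Type*} [MeasurableSpace X] [MeasurableSpace Y]
    [MeasurableSpace Z] {μ : Measure X} {ν : Measure Y} [SFinite μ] [SFinite ν]
    {f : X → ℝ≥0∞} {g : Y → ℝ≥0∞} (hf : Measurable f) (hg : Measurable g) {F : X × Y → Z}
    (hF : Measurable F) {h : Z → ℝ≥0∞} (hh : Measurable h) :
    ∫⁻ z, h z ∂((μ.withDensity f).prod (ν.withDensity g)).map F =
      ∫⁻ x, f x * ∫⁻ y, g y * h (F (x, y)) ∂ν ∂μ := by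
  have hhF : Measurable fun z => h (F z) := hh.comp hF
  rw [lintegral_map hh hF, lintegral_prod _ hhF.aemeasurable,
    lintegral_withDensity_eq_lintegral_mul _ hf hhF.lintegral_prod_right']
  refine lintegral_congr fun x => ?_
  have hhFx : Measurable fun y => h (F (x, y)) := hhF.comp measurable_prodMk_left
  rw [Pi.mul_apply, lintegral_withDensity_eq_lintegral_mul _ hg hhFx]
  rfl

lemma lintegral_eq_lintegral_of_invOn {s t : Set ℝ} {f f' φ : ℝ → ℝ} (hs : MeasurableSet s)
    (hf : ∀ x ∈ s, HasDerivWithinAt f (f' x) s x) (hinv : InvOn φ f s t) (hst : MapsTo f s t)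
    (hts : MapsTo φ t s) (g : ℝ → ℝ≥0∞) :
    ∫⁻ y in t, g y = ∫⁻ x in s, ENNReal.ofReal |f' x| * g (f x) := by
  have hbij := hinv.bijOn hst hts
  rw [← hbij.image_eq]
  exact lintegral_image_eq_lintegral_abs_deriv_mul hs hf hbij.injOn g

lemma lintegral_Ioi_eq_lintegral_Ioo_mul_div_one_sub {c : ℝ} (hc : 0 < c) (g : ℝ → ℝ≥0∞) :
    ∫⁻ w in Ioi 0, g w =
      ∫⁻ u in Ioo 0 1, ENNReal.ofReal (c / (1 - u) ^ 2) * g (c * u / (1 - u)) := by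
  have hderiv (u : ℝ) (hu : u ∈ Ioo (0 : ℝ) 1) :
      HasDerivWithinAt (fun u => c * u / (1 - u)) (c / (1 - u) ^ 2) (Ioo 0 1) u := by
    have h1u : 1 - u ≠ 0 := by linarith [hu.2]
    refine ((((hasDerivAt_id' u).const_mul c).div ((hasDerivAt_id' u).const_sub 1) h1u
      ).congr_deriv ?_).hasDerivWithinAt
    field_simp; ring
  have hinv : InvOn (fun w => w / (w + c)) (fun u => c * u / (1 - u)) (Ioo 0 1) (Ioi 0) := by
    refine ⟨fun u hu => ?_, fun w hw => ?_⟩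
    · have h1u : 1 - u ≠ 0 := by linarith [hu.2]
      simp only; field_simp; ring
    · have hwc : w + c ≠ 0 := by linarith [mem_Ioi.mp hw]
      simp only
      rw [show 1 - w / (w + c) = c / (w + c) by field_simp; ring]
      field_simp
  have hmaps : MapsTo (fun u => c * u / (1 - u)) (Ioo 0 1) (Ioi 0) := fun u hu =>
    div_pos (mul_pos hc hu.1) (by linarith [hu.2])
  have hmaps' : MapsTo (fun w => w / (w + c)) (Ioi 0) (Ioo 0 1) := fun w (hw : 0 < w) =>
    ⟨by positivity, (div_lt_one (by linarith)).mpr (by linarith)⟩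
  rw [lintegral_eq_lintegral_of_invOn measurableSet_Ioo hderiv hinv hmaps hmaps' g]
  refine setLIntegral_congr_fun measurableSet_Ioo fun u hu => ?_
  rw [abs_of_pos (div_pos hc (pow_pos (by linarith [hu.2]) 2))]

lemma lintegral_Ioo_eq_lintegral_Ioo_div_one_sub_mul {u : ℝ} (hu : u ∈ Ioo (0 : ℝ) 1)
    (g : ℝ → ℝ≥0∞) :
    ∫⁻ e in Ioo 0 1, g e = ∫⁻ t in Ioo 0 1,
      ENNReal.ofReal ((1 - u) / (1 - u * (1 - t)) ^ 2) * g (t / (1 - u * (1 - t))) := by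
  obtain ⟨hu0, hu1⟩ := hu
  have h1u : 1 - u ≠ 0 := by linarith
  have hΔ (t : ℝ) (ht : t ∈ Ioo (0 : ℝ) 1) : 0 < 1 - u * (1 - t) := by nlinarith [ht.1, ht.2]
  have hderiv (t : ℝ) (ht : t ∈ Ioo (0 : ℝ) 1) :
      HasDerivWithinAt (fun t => t / (1 - u * (1 - t))) ((1 - u) / (1 - u * (1 - t)) ^ 2)
        (Ioo 0 1) t := by
    refine (((hasDerivAt_id' t).div
      (((hasDerivAt_id' t).const_sub 1).const_mul u |>.const_sub 1) (hΔ t ht).ne'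
      ).congr_deriv ?_).hasDerivWithinAt
    ring
  have hinv : InvOn (fun e => e * (1 - u) / (1 - u * e)) (fun t => t / (1 - u * (1 - t)))
      (Ioo 0 1) (Ioo 0 1) := by
    refine ⟨fun t ht => ?_, fun e he => ?_⟩
    · have := (hΔ t ht).ne'
      simp only
      rw [show 1 - u * (t / (1 - u * (1 - t))) = (1 - u) / (1 - u * (1 - t)) by field_simp; ring]
      field_simp
    · have hue : 1 - u * e ≠ 0 := by nlinarith [he.1, he.2]
      simp only
      rw [show 1 - u * (1 - e * (1 - u) / (1 - u * e)) = (1 - u) / (1 - u * e) by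
          field_simp; ring, div_div_div_cancel_right₀ hue]
      field_simp
  have hmaps : MapsTo (fun t => t / (1 - u * (1 - t))) (Ioo 0 1) (Ioo 0 1) := fun t ht =>
    ⟨div_pos ht.1 (hΔ t ht), (div_lt_one (hΔ t ht)).mpr (by nlinarith [ht.1, ht.2])⟩
  have hmaps' : MapsTo (fun e => e * (1 - u) / (1 - u * e)) (Ioo 0 1) (Ioo 0 1) := fun e he => by
    have hue : 0 < 1 - u * e := by nlinarith [he.1, he.2]
    exact ⟨div_pos (mul_pos he.1 (by linarith)) hue, (div_lt_one hue).mpr (by nlinarith [he.2])⟩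
  rw [lintegral_eq_lintegral_of_invOn measurableSet_Ioo hderiv hinv hmaps hmaps' g]
  refine setLIntegral_congr_fun measurableSet_Ioo fun t ht => ?_
  rw [abs_of_pos (div_pos (by linarith) (pow_pos (hΔ t ht) 2))]

lemma support_betaPDF_subset (α β : ℝ) : (betaPDF α β).support ⊆ Ioo 0 1 := fun _ hx =>
  ⟨not_le.mp fun h => hx (betaPDF_eq_zero_of_nonpos h),
    not_le.mp fun h => hx (betaPDF_eq_zero_of_one_le h)⟩

lemma measurable_betaPDF (α β : ℝ) : Measurable (betaPDF α β) :=
  (measurable_betaPDFReal α β).ennreal_ofReal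

noncomputable def betaPrimePDF (α β x : ℝ) : ℝ≥0∞ :=
  ENNReal.ofReal (if 0 < x then 1 / beta α β * x ^ (α - 1) * (1 + x) ^ (-(α + β)) else 0)

lemma betaMeasure'_eq_betaMeasure (α β : ℝ) : betaMeasure' α β = betaMeasure α β := by
  unfold betaMeasure' betaMeasure betaPDF betaPDFReal beta
  simp only [one_div_div]
  rfl

lemma betaPrimeMeasure_eq_withDensity (α β : ℝ) :
    betaPrimeMeasure α β = volume.withDensity (betaPrimePDF α β) := by
  unfold betaPrimeMeasure betaPrimePDF beta
  simp only [one_div_div]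

@[fun_prop]
lemma measurable_betaPrimePDF (α β : ℝ) : Measurable (betaPrimePDF α β) :=
  (Measurable.ite measurableSet_Ioi (by fun_prop) measurable_const).ennreal_ofReal

lemma betaPrimePDF_eq_zero_of_nonpos {α β x : ℝ} (hx : x ≤ 0) : betaPrimePDF α β x = 0 := by
  simp [betaPrimePDF, hx.not_gt]

lemma betaPrimeMeasure_ne_zero {α β : ℝ} (hα : 0 < α) (hβ : 0 < β) :
    betaPrimeMeasure α β ≠ 0 := by
  rw [betaPrimeMeasure_eq_withDensity, ← Measure.measure_univ_ne_zero,
    Ne, withDensity_apply_eq_zero' (by fun_prop), inter_univ]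
  have hsupp : Ioi (0 : ℝ) ⊆ {x | betaPrimePDF α β x ≠ 0} := fun x hx => by
    have := beta_pos hα hβ
    have hx : 0 < x := hx
    simp only [betaPrimePDF, mem_ofPred_eq, if_pos hx, ne_eq, ENNReal.ofReal_eq_zero, not_le]
    positivity
  exact mt (measure_mono_null hsupp) (by simp)

noncomputable def etaTransitionDensity (α β e u : ℝ) : ℝ≥0∞ :=
  ENNReal.ofReal ((1 - e) / (1 - u) ^ 2) * betaPrimePDF α β ((1 - e) * u / (1 - u))

lemma measurable_etaTransitionDensity (α β : ℝ) :
    Measurable (Function.uncurry (etaTransitionDensity α β)) := by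
  unfold etaTransitionDensity
  fun_prop

lemma lintegral_betaPrimePDF_mul_comp (α β : ℝ) {e : ℝ} (he : e < 1) (g : ℝ → ℝ≥0∞) :
    ∫⁻ w, betaPrimePDF α β w * g (w / (w + 1 - e)) =
      ∫⁻ u in Ioo 0 1, etaTransitionDensity α β e u * g u := by
  have hc : 0 < 1 - e := by linarith
  have hsupp : (fun w => betaPrimePDF α β w * g (w / (w + 1 - e))).support ⊆ Ioi 0 :=
    fun w hw => mem_Ioi.mpr <| not_le.mp fun h =>
      hw (by simp [betaPrimePDF_eq_zero_of_nonpos h])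
  rw [← setLIntegral_eq_of_support_subset hsupp,
    lintegral_Ioi_eq_lintegral_Ioo_mul_div_one_sub hc]
  refine setLIntegral_congr_fun measurableSet_Ioo fun u hu => ?_
  have h1u : 1 - u ≠ 0 := by linarith [hu.2]
  have hinv : (1 - e) * u / (1 - u) / ((1 - e) * u / (1 - u) + 1 - e) = u := by
    rw [show (1 - e) * u / (1 - u) + 1 - e = (1 - e) / (1 - u) by field_simp; ring]
    field_simp
  rw [etaTransitionDensity, hinv, mul_assoc]

lemma betaPDF_mul_etaTransitionDensity_comp {α β u t : ℝ} (hα : 0 < α) (hβ : 0 < β)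
    (hu : u ∈ Ioo (0 : ℝ) 1) (ht : t ∈ Ioo (0 : ℝ) 1) :
    ENNReal.ofReal ((1 - u) / (1 - u * (1 - t)) ^ 2) *
        (betaPDF α β (t / (1 - u * (1 - t))) *
          etaTransitionDensity α (α + β) (t / (1 - u * (1 - t))) u) =
      betaPDF α β u * betaPDF α (α + β) t := by
  obtain ⟨hu0, hu1⟩ := hu
  obtain ⟨ht0, ht1⟩ := ht
  have h1u : 0 < 1 - u := by linarith
  have h1t : 0 < 1 - t := by linarith
  set Δ := 1 - u * (1 - t) with hΔ
  have hΔpos : 0 < Δ := by nlinarith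
  have h1e : 1 - t / Δ = (1 - t) * (1 - u) / Δ := by field_simp; ring
  have hw : (1 - t / Δ) * u / (1 - u) = u * (1 - t) / Δ := by rw [h1e]; field_simp
  have h1w : 1 + u * (1 - t) / Δ = Δ⁻¹ := by field_simp; ring
  have he1 : t / Δ < 1 := (div_lt_one hΔpos).mpr (by nlinarith)
  have hB₁ := beta_pos hα hβ
  have hB₂ := beta_pos hα (add_pos hα hβ)
  rw [etaTransitionDensity, hw, betaPDF_of_pos_lt_one (by positivity) he1,
    betaPDF_of_pos_lt_one hu0 hu1, betaPDF_of_pos_lt_one ht0 ht1, betaPrimePDF,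
    if_pos (by positivity), h1e, h1w, ← ENNReal.ofReal_mul (by positivity),
    ← ENNReal.ofReal_mul (by positivity), ← ENNReal.ofReal_mul (by positivity),
    ← ENNReal.ofReal_mul (by positivity)]
  congr 1
  -- the exponents are split so that every power of `Δ` cancels
  rw [Real.div_rpow ht0.le hΔpos.le, Real.div_rpow (by positivity) hΔpos.le,
    Real.div_rpow (by positivity) hΔpos.le, Real.mul_rpow h1t.le h1u.le,
    Real.mul_rpow hu0.le h1t.le, Real.inv_rpow hΔpos.le, Real.rpow_neg hΔpos.le, inv_inv,
    show α + β - 1 = (β - 1) + (α - 1) + 1 by ring, Real.rpow_add h1t, Real.rpow_add h1t,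
    Real.rpow_one, show α + (α + β) = (α - 1) + (β - 1) + (α - 1) + 3 by ring,
    Real.rpow_add hΔpos, Real.rpow_add hΔpos, Real.rpow_add hΔpos,
    show (3 : ℝ) = ((3 : ℕ) : ℝ) by norm_num, Real.rpow_natCast]
  have : Δ ^ (α - 1) ≠ 0 := (Real.rpow_pos_of_pos hΔpos _).ne'
  have : Δ ^ (β - 1) ≠ 0 := (Real.rpow_pos_of_pos hΔpos _).ne'
  field_simp

lemma lintegral_betaPDF_mul_etaTransitionDensity {α β u : ℝ} (hα : 0 < α) (hβ : 0 < β)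
    (hu : u ∈ Ioo (0 : ℝ) 1) :
    ∫⁻ e in Ioo 0 1, betaPDF α β e * etaTransitionDensity α (α + β) e u = betaPDF α β u := by
  rw [lintegral_Ioo_eq_lintegral_Ioo_div_one_sub_mul hu,
    setLIntegral_congr_fun measurableSet_Ioo
      fun t ht => betaPDF_mul_etaTransitionDensity_comp hα hβ hu ht,
    lintegral_const_mul' (betaPDF α β u) _ ENNReal.ofReal_ne_top,
    setLIntegral_eq_of_support_subset (support_betaPDF_subset _ _),
    lintegral_betaPDF_eq_one hα (add_pos hα hβ), mul_one]

lemma map_prod_betaMeasure_betaPrimeMeasure {α β : ℝ} (hα : 0 < α) (hβ : 0 < β) :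
    ((betaMeasure α β).prod (betaPrimeMeasure α (α + β))).map
      (fun q : ℝ × ℝ => q.2 / (q.2 + 1 - q.1)) = betaMeasure α β := by
  have hF : Measurable fun q : ℝ × ℝ => q.2 / (q.2 + 1 - q.1) := by fun_prop
  refine Measure.ext_of_lintegral _ fun f hf => ?_
  have hK := measurable_etaTransitionDensity α (α + β)
  have hsupp {g : ℝ → ℝ≥0∞} : (fun x => betaPDF α β x * g x).support ⊆ Ioo 0 1 :=
    (Function.support_mul_subset_left _ _).trans (support_betaPDF_subset α β)
  calc ∫⁻ x, f x ∂((betaMeasure α β).prod (betaPrimeMeasure α (α + β))).map _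
      = ∫⁻ e, betaPDF α β e * ∫⁻ w, betaPrimePDF α (α + β) w * f (w / (w + 1 - e)) := by
        rw [betaMeasure, betaPrimeMeasure_eq_withDensity]
        exact lintegral_map_prod_withDensity (measurable_betaPDF α β)
          (measurable_betaPrimePDF _ _) hF hf
    _ = ∫⁻ e in Ioo 0 1, ∫⁻ u in Ioo 0 1,
          betaPDF α β e * (etaTransitionDensity α (α + β) e u * f u) := by
        rw [← setLIntegral_eq_of_support_subset hsupp]
        refine setLIntegral_congr_fun measurableSet_Ioo fun e he => ?_
        rw [lintegral_betaPrimePDF_mul_comp _ _ he.2,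
          lintegral_const_mul' (betaPDF α β e) _ ENNReal.ofReal_ne_top]
    _ = ∫⁻ u in Ioo 0 1,
          (∫⁻ e in Ioo 0 1, betaPDF α β e * etaTransitionDensity α (α + β) e u) * f u := by
        rw [lintegral_lintegral_swap (((measurable_betaPDF α β).comp measurable_fst).mul
          (hK.mul (hf.comp measurable_snd))).aemeasurable]
        refine lintegral_congr fun u => ?_
        simp_rw [← mul_assoc]
        exact lintegral_mul_const _
          ((measurable_betaPDF α β).mul (hK.comp (measurable_id.prodMk measurable_const)))
    _ = ∫⁻ u in Ioo 0 1, betaPDF α β u * f u :=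
        setLIntegral_congr_fun measurableSet_Ioo fun u hu => by
          rw [lintegral_betaPDF_mul_etaTransitionDensity hα hβ hu]
    _ = ∫⁻ x, f x ∂betaMeasure α β := by
        rw [setLIntegral_eq_of_support_subset hsupp, betaMeasure,
          lintegral_withDensity_eq_lintegral_mul _ (measurable_betaPDF α β) hf]
        rfl

/-- for the Markov chain `η_k = W_k / (W_k + 1 - η_{k-1})` on `[0,1)` with
`W_k ~ BetaPrime(p/2, (n+p)/2)` i.i.d., the distribution `Beta(p/2, n/2)` is stationary:
if `η ~ Beta(p/2, n/2)` and `W ~ BetaPrime(p/2, (n+p)/2)` are independent, then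
`W/(W + 1 - η) ~ Beta(p/2, n/2)`. -/
theorem beta_stationary_for_eta_chain
    {Ω : Type*} [MeasurableSpace Ω] (μ : Measure Ω) [IsProbabilityMeasure μ]
    (n p : ℕ) (hn : 5 ≤ n) (hp : 1 ≤ p)
    (η W : Ω → ℝ)
    (hη : μ.map η = betaMeasure' ((p : ℝ) / 2) ((n : ℝ) / 2))
    (hW : μ.map W = betaPrimeMeasure ((p : ℝ) / 2) (((n : ℝ) + (p : ℝ)) / 2))
    (hind : IndepFun η W μ) :
    μ.map (fun ω => W ω / (W ω + 1 - η ω))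
      = betaMeasure' ((p : ℝ) / 2) ((n : ℝ) / 2) := by
  have ha : 0 < (p : ℝ) / 2 := by have : (0 : ℝ) < p := Nat.cast_pos.mpr hp; positivity
  have hb : 0 < (n : ℝ) / 2 := by have : (0 : ℝ) < n := Nat.cast_pos.mpr (by omega); positivity
  have := isProbabilityMeasureBeta ha hb
  rw [betaMeasure'_eq_betaMeasure] at hη ⊢
  rw [show ((n : ℝ) + p) / 2 = p / 2 + n / 2 by ring] at hW
  have hηm : AEMeasurable η μ := .of_map_ne_zero (hη ▸ IsProbabilityMeasure.ne_zero _)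
  have hWm : AEMeasurable W μ :=
    .of_map_ne_zero (hW ▸ betaPrimeMeasure_ne_zero ha (add_pos ha hb))
  have hF : Measurable fun q : ℝ × ℝ => q.2 / (q.2 + 1 - q.1) := by fun_prop
  calc μ.map (fun ω => W ω / (W ω + 1 - η ω))
      = (μ.map fun ω => (η ω, W ω)).map fun q => q.2 / (q.2 + 1 - q.1) :=
        (AEMeasurable.map_map_of_aemeasurable hF.aemeasurable (hηm.prodMk hWm)).symm
    _ = ((μ.map η).prod (μ.map W)).map fun q => q.2 / (q.2 + 1 - q.1) := by
        rw [(indepFun_iff_map_prod_eq_prod_map_map hηm hWm).mp hind]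
    _ = betaMeasure (p / 2) (n / 2) := by
        rw [hη, hW]
        exact map_prod_betaMeasure_betaPrimeMeasure ha hb
end

section
/- Let $H_k(\mu_0) = N_p(r^k\mu_0,\; v(1-r^{2k})I_p)$ and $H = N_p(0, v\, I_p)$ where $v = (\sigma^2+\tau^2)/n$ and $r = \sigma^2/(\sigma^2+\tau^2) \in (0,1)$. Then the Wasserstein-1 distance (with respect to the $\ell_1$ norm) satisfies $\frac{1}{p}\,d_W[H_k(\mu_0), H] \le \left[\frac{1}{p}\|\mu_0\|_1 + \sqrt{\frac{2(\sigma^2+\tau^2)}{n\pi}}\right] r^k$ for every $k \ge 0$, and $\frac{1}{p} d_W[H_k(\mu_0), H] \ge \frac{1}{p}\|\mu_0\|_1\, r^k$. -/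
/-!
Upper bound: if `Y ~ H` then `X = r^k μ₀ + s Y` with `s = √(1 - r^{2k})` has law `H_k(μ₀)`,
and coordinatewise `E|X_i - Y_i| ≤ r^k |μ₀ i| + E|Y_i| - E|s Y_i|`, where
`E|Y_i| - E|s Y_i| = (1 - s) √(2v/π) ≤ r^k √(2v/π)` because `1 - x ≤ √(1 - x²)` on `[0, 1]`.
Lower bound: under any coupling, `E|X_i - Y_i| ≥ |E X_i - E Y_i| = r^k |μ₀ i|`.
-/

open MeasureTheory ProbabilityTheory

/-- Wasserstein-1 distance (with respect to the `ℓ¹` norm on `Fin p → ℝ`) between two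
probability measures, as an infimum over couplings. -/
noncomputable def wasserstein1 (p : ℕ) (P Q : Measure (Fin p → ℝ)) : ℝ :=
  sInf { d : ℝ | ∃ γ : Measure ((Fin p → ℝ) × (Fin p → ℝ)),
    IsProbabilityMeasure γ ∧ γ.map Prod.fst = P ∧ γ.map Prod.snd = Q ∧
      d = ∫ z, ∑ i, |z.1 i - z.2 i| ∂γ }

open Real Set
open scoped NNReal

section Coupling

variable {p : ℕ} {P Q : Measure (Fin p → ℝ)}

lemma wasserstein1_le_integral_of_coupling {γ : Measure ((Fin p → ℝ) × (Fin p → ℝ))}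
    [IsProbabilityMeasure γ] (hfst : γ.map Prod.fst = P) (hsnd : γ.map Prod.snd = Q) :
    wasserstein1 p P Q ≤ ∫ z, ∑ i, |z.1 i - z.2 i| ∂γ := by
  refine csInf_le ⟨0, ?_⟩ ⟨γ, inferInstance, hfst, hsnd, rfl⟩
  rintro d ⟨γ', -, -, -, rfl⟩
  exact integral_nonneg fun z => by positivity

lemma wasserstein1_le_integral_of_map_eq [IsProbabilityMeasure Q]
    {f : (Fin p → ℝ) → Fin p → ℝ} (hf : Measurable f) (hP : Q.map f = P) :
    wasserstein1 p P Q ≤ ∫ y, ∑ i, |f y i - y i| ∂Q := by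
  have hg : Measurable fun y => (f y, y) := hf.prodMk measurable_id
  have hcost : Measurable fun z : (Fin p → ℝ) × (Fin p → ℝ) => ∑ i, |z.1 i - z.2 i| := by
    fun_prop
  have := Measure.isProbabilityMeasure_map (μ := Q) hg.aemeasurable
  calc wasserstein1 p P Q ≤ ∫ z, ∑ i, |z.1 i - z.2 i| ∂Q.map fun y => (f y, y) := by
        refine wasserstein1_le_integral_of_coupling ?_ ?_
        · rw [Measure.map_map measurable_fst hg]; exact hP
        · rw [Measure.map_map measurable_snd hg]; exact Measure.map_id
    _ = ∫ y, ∑ i, |f y i - y i| ∂Q := integral_map hg.aemeasurable hcost.aestronglyMeasurable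

lemma sum_abs_integral_sub_le_integral_of_coupling
    {γ : Measure ((Fin p → ℝ) × (Fin p → ℝ))}
    (hfst : γ.map Prod.fst = P) (hsnd : γ.map Prod.snd = Q)
    (hP : ∀ i, Integrable (fun x => x i) P) (hQ : ∀ i, Integrable (fun x => x i) Q) :
    ∑ i, |∫ x, x i ∂P - ∫ x, x i ∂Q| ≤ ∫ z, ∑ i, |z.1 i - z.2 i| ∂γ := by
  have h1 (i : Fin p) : Integrable (fun z : (Fin p → ℝ) × (Fin p → ℝ) => z.1 i) γ :=
    (integrable_map_measure (measurable_pi_apply i).aestronglyMeasurable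
      measurable_fst.aemeasurable).mp (hfst ▸ hP i)
  have h2 (i : Fin p) : Integrable (fun z : (Fin p → ℝ) × (Fin p → ℝ) => z.2 i) γ :=
    (integrable_map_measure (measurable_pi_apply i).aestronglyMeasurable
      measurable_snd.aemeasurable).mp (hsnd ▸ hQ i)
  rw [integral_finsetSum _ fun i _ =>
    (show Integrable (fun z => |z.1 i - z.2 i|) γ from ((h1 i).sub (h2 i)).abs)]
  refine Finset.sum_le_sum fun i _ => ?_
  rw [← hfst, ← hsnd,
    integral_map (f := fun x : Fin p → ℝ => x i) measurable_fst.aemeasurable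
      (continuous_apply i).aestronglyMeasurable,
    integral_map (f := fun x : Fin p → ℝ => x i) measurable_snd.aemeasurable
      (continuous_apply i).aestronglyMeasurable,
    ← integral_sub (h1 i) (h2 i)]
  exact abs_integral_le_integral_abs

lemma sum_abs_integral_sub_le_wasserstein1 [IsProbabilityMeasure P] [IsProbabilityMeasure Q]
    (hP : ∀ i, Integrable (fun x => x i) P) (hQ : ∀ i, Integrable (fun x => x i) Q) :
    ∑ i, |∫ x, x i ∂P - ∫ x, x i ∂Q| ≤ wasserstein1 p P Q := by
  refine le_csInf ⟨_, P.prod Q, inferInstance, by simp, by simp, rfl⟩ ?_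
  rintro d ⟨γ, -, hfst, hsnd, rfl⟩
  exact sum_abs_integral_sub_le_integral_of_coupling hfst hsnd hP hQ

end Coupling

lemma integral_Ioi_mul_exp_neg_mul_sq {b : ℝ} (hb : 0 < b) :
    ∫ x in Ioi (0 : ℝ), x * exp (-b * x ^ 2) = (2 * b)⁻¹ := by
  exact_mod_cast integral_mul_cexp_neg_mul_sq (b := (b : ℂ)) (by simpa using hb)

lemma integral_abs_mul_exp_neg_mul_sq {b : ℝ} (hb : 0 < b) :
    ∫ x, |x| * exp (-b * x ^ 2) = b⁻¹ := by
  calc ∫ x, |x| * exp (-b * x ^ 2) = ∫ x, (fun t => t * exp (-b * t ^ 2)) |x| := by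
        simp only [sq_abs]
    _ = b⁻¹ := by
        rw [integral_comp_abs (f := fun t => t * exp (-b * t ^ 2)),
          integral_Ioi_mul_exp_neg_mul_sq hb]
        field_simp

namespace ProbabilityTheory

lemma integral_abs_gaussianReal_zero (v : ℝ≥0) :
    ∫ x, |x| ∂gaussianReal 0 v = √(2 * v / π) := by
  rcases eq_or_ne v 0 with rfl | hv
  · simp [gaussianReal_zero_var]
  have hpdf (x : ℝ) : gaussianPDFReal 0 v x • |x| =
      (√(2 * π * v))⁻¹ * (|x| * exp (-(2 * v : ℝ)⁻¹ * x ^ 2)) := by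
    rw [gaussianPDFReal, smul_eq_mul]; ring_nf
  have hv' : (0 : ℝ) < v := by positivity
  rw [integral_gaussianReal_eq_integral_smul hv]
  simp only [hpdf]
  rw [integral_const_mul, integral_abs_mul_exp_neg_mul_sq (by positivity), inv_inv,
    eq_comm, Real.sqrt_eq_iff_mul_self_eq_of_pos (by positivity)]
  field_simp
  rw [Real.sq_sqrt (by positivity)]

lemma gaussianReal_map_sqrt_div_mul {v w : ℝ≥0} (hwv : w ≤ v) :
    (gaussianReal 0 v).map (√(w / v) * ·) = gaussianReal 0 w := by
  rw [gaussianReal_map_const_mul, mul_zero]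
  congr 1
  ext
  change √(w / v : ℝ) ^ 2 * v = w
  rcases eq_or_ne v 0 with rfl | hv
  · simp [le_zero_iff.mp hwv]
  · rw [Real.sq_sqrt (by positivity), div_mul_cancel₀ _ (by positivity)]

lemma integrable_id_gaussianReal (μ : ℝ) (v : ℝ≥0) : Integrable id (gaussianReal μ v) :=
  memLp_one_iff_integrable.mp (by exact_mod_cast memLp_id_gaussianReal (μ := μ) (v := v) 1)

lemma gaussianReal_map_const_add_sqrt_div_mul (m : ℝ) {v w : ℝ≥0} (hwv : w ≤ v) :
    (gaussianReal 0 v).map (fun t => m + √(w / v) * t) = gaussianReal m w := by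
  have hcomp : (fun t => m + √(w / v) * t) = (m + ·) ∘ (√(w / v) * ·) := rfl
  rw [hcomp, ← Measure.map_map (by fun_prop) (by fun_prop), gaussianReal_map_sqrt_div_mul hwv,
    gaussianReal_map_const_add, zero_add]

lemma integral_abs_const_add_sqrt_div_mul_sub_le (m : ℝ) {v w : ℝ≥0} (hwv : w ≤ v) :
    ∫ t, |m + √(w / v) * t - t| ∂gaussianReal 0 v ≤ |m| + (√(2 * v / π) - √(2 * w / π)) := by
  set s := √(w / v)
  have hs1 : s ≤ 1 := Real.sqrt_le_one.mpr (div_le_one_of_le₀ (by exact_mod_cast hwv) v.2)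
  have habs : Integrable (fun t => |t|) (gaussianReal 0 v) :=
    (integrable_id_gaussianReal 0 v).abs
  have hscaled : Integrable (fun t => |s * t|) (gaussianReal 0 v) :=
    ((integrable_id_gaussianReal 0 v).const_mul s).abs
  have hdiff : Integrable (fun t => |t| - |s * t|) (gaussianReal 0 v) := habs.sub hscaled
  have habs_scaled : ∫ t, |s * t| ∂gaussianReal 0 v = √(2 * w / π) := by
    rw [← integral_abs_gaussianReal_zero, ← gaussianReal_map_sqrt_div_mul hwv,
      integral_map (by fun_prop) (by fun_prop)]
  have hpointwise (t : ℝ) : |m + s * t - t| ≤ |m| + (|t| - |s * t|) :=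
    calc |m + s * t - t| = |m + (s - 1) * t| := by ring_nf
      _ ≤ |m| + |(s - 1) * t| := abs_add_le _ _
      _ = |m| + (|t| - |s * t|) := by
        rw [abs_mul, abs_mul, abs_of_nonpos (a := s - 1) (by linarith),
          abs_of_nonneg (a := s) (Real.sqrt_nonneg _)]
        ring
  calc ∫ t, |m + s * t - t| ∂gaussianReal 0 v
      ≤ ∫ t, |m| + (|t| - |s * t|) ∂gaussianReal 0 v :=
        integral_mono_of_nonneg (ae_of_all _ fun _ => abs_nonneg _)
          ((integrable_const _).add hdiff)
          (ae_of_all _ hpointwise)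
    _ = |m| + (√(2 * v / π) - √(2 * w / π)) := by
      rw [integral_add (integrable_const _) hdiff, integral_sub habs hscaled,
        habs_scaled]
      simp [integral_abs_gaussianReal_zero]

end ProbabilityTheory

lemma sqrt_sub_sqrt_mul_one_sub_sq_le {a x : ℝ} (hx0 : 0 ≤ x) (hx1 : x ≤ 1) :
    √a - √(a * (1 - x ^ 2)) ≤ x * √a := by
  have h : 1 - x ≤ √(1 - x ^ 2) := (Real.le_sqrt (by linarith) (by nlinarith)).mpr (by nlinarith)
  rw [Real.sqrt_mul' a (by nlinarith)]
  nlinarith [Real.sqrt_nonneg a]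

section GaussianProduct

variable {p : ℕ}

lemma wasserstein1_pi_gaussianReal_le (m : Fin p → ℝ) {v w : Fin p → ℝ≥0}
    (hwv : ∀ i, w i ≤ v i) :
    wasserstein1 p (Measure.pi fun i => gaussianReal (m i) (w i))
        (Measure.pi fun i => gaussianReal 0 (v i)) ≤
      ∑ i, (|m i| + (√(2 * v i / π) - √(2 * w i / π))) := by
  set s : Fin p → ℝ := fun i => √(w i / v i)
  have hmap : (Measure.pi fun i => gaussianReal 0 (v i)).map (fun y i => m i + s i * y i) =
      Measure.pi fun i => gaussianReal (m i) (w i) := by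
    rw [Measure.pi_map_pi (f := fun i t => m i + s i * t) fun i => by fun_prop]
    exact congrArg Measure.pi <| funext fun i =>
      gaussianReal_map_const_add_sqrt_div_mul _ (hwv i)
  have hint (i : Fin p) : Integrable (fun y : Fin p → ℝ => |m i + s i * y i - y i|)
      (Measure.pi fun i => gaussianReal 0 (v i)) :=
    integrable_comp_eval (X := fun _ => ℝ) (i := i) (f := fun t : ℝ => |m i + s i * t - t|)
      (((integrable_const _).add ((integrable_id_gaussianReal 0 (v i)).const_mul _)).sub
        (integrable_id_gaussianReal 0 (v i))).abs
  calc wasserstein1 p _ _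
      ≤ ∫ y, ∑ i, |m i + s i * y i - y i| ∂Measure.pi fun i => gaussianReal 0 (v i) :=
        wasserstein1_le_integral_of_map_eq (by fun_prop) hmap
    _ = ∑ i, ∫ t, |m i + s i * t - t| ∂gaussianReal 0 (v i) := by
        rw [integral_finsetSum _ fun i _ => hint i]
        exact Finset.sum_congr rfl fun i _ =>
          integral_comp_eval (X := fun _ => ℝ) (i := i) (f := fun t : ℝ => |m i + s i * t - t|)
            (by fun_prop)
    _ ≤ _ := Finset.sum_le_sum fun i _ => integral_abs_const_add_sqrt_div_mul_sub_le _ (hwv i)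

lemma sum_abs_sub_le_wasserstein1_pi_gaussianReal (m m' : Fin p → ℝ) (w v : Fin p → ℝ≥0) :
    ∑ i, |m i - m' i| ≤ wasserstein1 p (Measure.pi fun i => gaussianReal (m i) (w i))
      (Measure.pi fun i => gaussianReal (m' i) (v i)) := by
  simpa [integral_eval, integral_id_gaussianReal] using
    sum_abs_integral_sub_le_wasserstein1
      (fun _ => integrable_eval (integrable_id_gaussianReal _ _))
      (fun _ => integrable_eval (integrable_id_gaussianReal _ _))

lemma wasserstein1_pi_gaussianReal_mul_le (μ0 : Fin p → ℝ) {v x : ℝ} (hv : 0 ≤ v)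
    (hx0 : 0 ≤ x) (hx1 : x ≤ 1) :
    wasserstein1 p (Measure.pi fun i => gaussianReal (x * μ0 i) (v * (1 - x ^ 2)).toNNReal)
        (Measure.pi fun _ => gaussianReal 0 v.toNNReal) ≤
      x * (∑ i, |μ0 i| + p * √(2 * v / π)) := by
  have hw : 0 ≤ v * (1 - x ^ 2) := mul_nonneg hv (by nlinarith)
  have hgap : √(2 * v.toNNReal / π) - √(2 * (v * (1 - x ^ 2)).toNNReal / π) ≤
      x * √(2 * v / π) := by
    rw [Real.coe_toNNReal _ hv, Real.coe_toNNReal _ hw,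
      show 2 * (v * (1 - x ^ 2)) / π = 2 * v / π * (1 - x ^ 2) by ring]
    exact sqrt_sub_sqrt_mul_one_sub_sq_le hx0 hx1
  calc wasserstein1 p _ _
      ≤ ∑ i, (|x * μ0 i| +
          (√(2 * v.toNNReal / π) - √(2 * (v * (1 - x ^ 2)).toNNReal / π))) :=
        wasserstein1_pi_gaussianReal_le _ fun _ => Real.toNNReal_le_toNNReal (by nlinarith)
    _ ≤ ∑ i, (x * |μ0 i| + x * √(2 * v / π)) :=
        Finset.sum_le_sum fun i _ => add_le_add (by rw [abs_mul, abs_of_nonneg hx0]) hgap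
    _ = x * (∑ i, |μ0 i| + p * √(2 * v / π)) := by
        rw [Finset.sum_add_distrib, ← Finset.mul_sum, Finset.sum_const, Finset.card_univ,
          Fintype.card_fin, nsmul_eq_mul]
        ring

end GaussianProduct

theorem wasserstein_bounds_hierarchical_general
    (p n : ℕ) (hp : 1 ≤ p)
    (σ2 τ2 : ℝ) (hσ : 0 < σ2) (hτ : 0 < τ2)
    (μ0 : Fin p → ℝ) :
    ∀ k : ℕ,
      (1 / (p : ℝ)) * wasserstein1 p
          (Measure.pi fun i => gaussianReal ((σ2 / (σ2 + τ2)) ^ k * μ0 i)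
            (Real.toNNReal ((σ2 + τ2) / (n : ℝ) *
              (1 - (σ2 / (σ2 + τ2)) ^ (2 * k)))))
          (Measure.pi fun _ => gaussianReal 0 (Real.toNNReal ((σ2 + τ2) / (n : ℝ))))
        ≤ ((1 / (p : ℝ)) * ∑ i, |μ0 i| +
            Real.sqrt (2 * (σ2 + τ2) / ((n : ℝ) * Real.pi))) *
          (σ2 / (σ2 + τ2)) ^ k ∧
      (1 / (p : ℝ)) * (∑ i, |μ0 i|) * (σ2 / (σ2 + τ2)) ^ k
        ≤ (1 / (p : ℝ)) * wasserstein1 p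
            (Measure.pi fun i => gaussianReal ((σ2 / (σ2 + τ2)) ^ k * μ0 i)
              (Real.toNNReal ((σ2 + τ2) / (n : ℝ) *
                (1 - (σ2 / (σ2 + τ2)) ^ (2 * k)))))
            (Measure.pi fun _ => gaussianReal 0
              (Real.toNNReal ((σ2 + τ2) / (n : ℝ)))) := by
  intro k
  set r := σ2 / (σ2 + τ2)
  set v := (σ2 + τ2) / (n : ℝ)
  have hrk0 : 0 ≤ r ^ k := by positivity
  have hrk1 : r ^ k ≤ 1 :=
    pow_le_one₀ (by positivity) (div_le_one_of_le₀ (by linarith) (by positivity))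
  have hp' : (p : ℝ) ≠ 0 := Nat.cast_ne_zero.mpr (by omega)
  rw [pow_mul', show 2 * (σ2 + τ2) / (n * π) = 2 * v / π by ring]
  constructor
  · calc (1 / (p : ℝ)) * wasserstein1 p _ _
        ≤ (1 / p) * (r ^ k * (∑ i, |μ0 i| + p * √(2 * v / π))) := by
          gcongr
          exact wasserstein1_pi_gaussianReal_mul_le μ0 (by positivity) hrk0 hrk1
      _ = _ := by field_simp
  · have hW := sum_abs_sub_le_wasserstein1_pi_gaussianReal (fun i => r ^ k * μ0 i) 0
      (fun _ => (v * (1 - (r ^ k) ^ 2)).toNNReal) fun _ => v.toNNReal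
    simp only [Pi.zero_apply, sub_zero, abs_mul, abs_of_nonneg hrk0, ← Finset.mul_sum] at hW
    calc (1 / (p : ℝ)) * (∑ i, |μ0 i|) * r ^ k = (1 / p) * (r ^ k * ∑ i, |μ0 i|) := by ring
      _ ≤ _ := by gcongr

/-- for `H_k(μ₀) = N_p(r^k μ₀, v(1-r^{2k})I_p)` and `H = N_p(0, v I_p)`
with `v = (σ²+τ²)/n` and `r = σ²/(σ²+τ²) ∈ (0,1)`,
`(1/p) d_W[H_k(μ₀), H] ≤ [(1/p)‖μ₀‖₁ + √(2(σ²+τ²)/(nπ))] r^k` and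
`(1/p) d_W[H_k(μ₀), H] ≥ (1/p)‖μ₀‖₁ r^k` for every `k ≥ 0`. -/
theorem wasserstein_bounds_hierarchical
    (p n : ℕ) (hp : 1 ≤ p) (hn : 1 ≤ n)
    (σ2 τ2 : ℝ) (hσ : 0 < σ2) (hτ : 0 < τ2)
    (μ0 : Fin p → ℝ) :
    ∀ k : ℕ,
      (1 / (p : ℝ)) * wasserstein1 p
          (Measure.pi fun i => gaussianReal ((σ2 / (σ2 + τ2)) ^ k * μ0 i)
            (Real.toNNReal ((σ2 + τ2) / (n : ℝ) *
              (1 - (σ2 / (σ2 + τ2)) ^ (2 * k)))))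
          (Measure.pi fun _ => gaussianReal 0 (Real.toNNReal ((σ2 + τ2) / (n : ℝ))))
        ≤ ((1 / (p : ℝ)) * ∑ i, |μ0 i| +
            Real.sqrt (2 * (σ2 + τ2) / ((n : ℝ) * Real.pi))) *
          (σ2 / (σ2 + τ2)) ^ k ∧
      (1 / (p : ℝ)) * (∑ i, |μ0 i|) * (σ2 / (σ2 + τ2)) ^ k
        ≤ (1 / (p : ℝ)) * wasserstein1 p
            (Measure.pi fun i => gaussianReal ((σ2 / (σ2 + τ2)) ^ k * μ0 i)
              (Real.toNNReal ((σ2 + τ2) / (n : ℝ) *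
                (1 - (σ2 / (σ2 + τ2)) ^ (2 * k)))))
            (Measure.pi fun _ => gaussianReal 0
              (Real.toNNReal ((σ2 + τ2) / (n : ℝ)))) :=
  wasserstein_bounds_hierarchical_general p n hp σ2 τ2 hσ hτ μ0
end

section
/- Consider the upper bound from Choi and Hobert for the logistic regression Gibbs sampler: $\tilde r = 1 - \delta$ with $\delta = \lambda^{p/2}(\det A)^{-1/2}\, 2^{-n}\exp\left(-\frac{n}{4} - \frac{1}{4\lambda}\|X A^{-1/2} X^T \tilde Y\|_2^2\right)$ where $A = \frac12 X^T X + \lambda I_p$. Since $\det A \ge \lambda^p$, we have $\delta \le 2^{-n} e^{-n/4}$, and hence for fixed $p$ the bound $\tilde r \to 1$ exponentially fast as $n \to \infty$; moreover the number of iterations $K_{n,\epsilon} = \log(\epsilon/M)/\log(1-\delta)$ needed to reach tolerance $\epsilon$ satisfies $K_{n,\epsilon} \ge (2e^{1/4})^n \log(M/\epsilon)$ for large $n$ (using $1/\log(1/(1-\delta)) \ge$ asymptotically $1/\delta$ behavior). -/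
open Matrix Filter Real
open scoped MatrixOrder

/-! Every eigenvalue of `A = ½ XᵀX + λ I` is at least `λ`, so `det A ≥ λ^p` and the prefactor
`λ^{p/2} (det A)^{-1/2}` is at most `1`; the exponential factor is at most `e^{-n/4}`. Hence
`δₙ ≤ b⁻ⁿ` with `b = 2 e^{1/4} > 1`. Since `-log (1 - δ) ≤ δ / (1 - δ)`, the iteration count
`log (ε/M) / log (1 - δ)` is at least `(1 - δ) bⁿ log (M/ε)`, and `1 - δₙ` eventually exceeds any
`c < 1`. -/

theorem Matrix.pow_card_le_det_of_posSemidef_sub {n : Type*} [Fintype n] [DecidableEq n]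
    {A : Matrix n n ℝ} {l : ℝ} (hl : 0 ≤ l) (h : (A - l • 1).PosSemidef) :
    l ^ Fintype.card n ≤ A.det := by
  have hA : A.IsHermitian := by
    simpa using h.isHermitian.add (isHermitian_one.smul (IsSelfAdjoint.all l))
  have hle : algebraMap ℝ (Matrix n n ℝ) l ≤ A := by
    rwa [Matrix.le_iff, Algebra.algebraMap_eq_smul_one]
  rw [algebraMap_le_iff_le_spectrum hA.isSelfAdjoint] at hle
  rw [hA.det_eq_prod_eigenvalues, ← Finset.card_univ, ← Finset.prod_const]
  exact Finset.prod_le_prod (fun _ _ => hl) fun i _ => hle _ (hA.eigenvalues_mem_spectrum_real i)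

theorem Matrix.posSemidef_transpose_mul_self {m n : Type*} [Fintype m] [Fintype n] (X : Matrix m n ℝ) :
    (Xᵀ * X).PosSemidef := by
  simpa using posSemidef_conjTranspose_mul_self X

theorem rpow_div_two_mul_rpow_neg_half_le_one {l d : ℝ} {p : ℕ} (hl : 0 < l) (h : l ^ p ≤ d) :
    l ^ ((p : ℝ) / 2) * d ^ (-(1 / 2) : ℝ) ≤ 1 := by
  have hd : 0 < d := (pow_pos hl p).trans_le h
  rw [rpow_neg hd.le, ← div_eq_mul_inv, div_le_one (rpow_pos_of_pos hd _), div_eq_mul_one_div,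
    rpow_mul hl.le, rpow_natCast]
  exact rpow_le_rpow (pow_nonneg hl.le p) h (by norm_num)

theorem two_rpow_neg_mul_exp_neg_div_four (n : ℕ) :
    (2 : ℝ) ^ (-(n : ℝ)) * exp (-(n : ℝ) / 4) = ((2 * exp (1 / 4)) ^ n)⁻¹ := by
  rw [rpow_neg zero_le_two, rpow_natCast, mul_pow, ← exp_nat_mul, mul_inv, ← exp_neg]
  ring_nf

theorem Real.neg_log_one_sub_le {x : ℝ} (hx : x < 1) : -log (1 - x) ≤ x / (1 - x) := by
  have h := one_sub_inv_le_log_of_pos (sub_pos.2 hx)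
  have : 1 - (1 - x)⁻¹ = -(x / (1 - x)) := by field_simp [(sub_pos.2 hx).ne']; ring
  linarith

theorem mul_le_neg_div_log_one_sub {B L c x : ℝ} (hc : 0 < c) (hx : 0 < x) (hxc : x ≤ 1 - c)
    (hL : 0 ≤ L) (hB : 0 ≤ B) (hBx : B * x ≤ 1) :
    c * B * L ≤ -L / log (1 - x) := by
  have h1x : 0 < 1 - x := by linarith
  have hlog : 0 < -log (1 - x) := neg_pos.2 (log_neg h1x (by linarith))
  have key : c * B * -log (1 - x) ≤ 1 :=
    calc c * B * -log (1 - x) ≤ c * B * (x / (1 - x)) := by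
          gcongr; exact neg_log_one_sub_le (by linarith)
      _ = c * (B * x) / (1 - x) := by ring
      _ ≤ c * 1 / (1 - x) := by gcongr
      _ ≤ 1 := by rw [mul_one, div_le_one h1x]; linarith
  rw [← neg_div_neg_eq, neg_neg, le_div_iff₀ hlog]
  nlinarith

theorem choi_hobert_bound_degenerates_general
    (p : ℕ) (l : ℝ) (hl : 0 < l) (M ε : ℝ) (hε : 0 < ε) (hεM : ε < M)
    (X : (n : ℕ) → Matrix (Fin n) (Fin p) ℝ)
    (Yt : (n : ℕ) → Fin n → ℝ)
    (S : (n : ℕ) → Matrix (Fin p) (Fin p) ℝ)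
    (A : (n : ℕ) → Matrix (Fin p) (Fin p) ℝ)
    (hA : ∀ n, A n = (1 / 2 : ℝ) • ((X n)ᵀ * X n) + l • (1 : Matrix (Fin p) (Fin p) ℝ))
    (δ : ℕ → ℝ)
    (hδ : ∀ n, δ n = l ^ ((p : ℝ) / 2) * ((A n).det) ^ (-(1 / 2) : ℝ) *
      (2 : ℝ) ^ (-(n : ℝ)) *
      Real.exp (-(n : ℝ) / 4 -
        (1 / (4 * l)) * ∑ i, ((X n) *ᵥ (S n *ᵥ ((X n)ᵀ *ᵥ Yt n))) i ^ 2)) :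
    (∀ n, l ^ p ≤ (A n).det) ∧
    (∀ n, δ n ≤ (2 : ℝ) ^ (-(n : ℝ)) * Real.exp (-(n : ℝ) / 4)) ∧
    Tendsto (fun n => 1 - δ n) atTop (nhds 1) ∧
    (∀ c : ℝ, 0 < c → c < 1 → ∃ N : ℕ, ∀ n ≥ N,
      c * (2 * Real.exp (1 / 4)) ^ n * Real.log (M / ε)
        ≤ Real.log (ε / M) / Real.log (1 - δ n)) := by
  have hdet (n : ℕ) : l ^ p ≤ (A n).det := by
    simpa using pow_card_le_det_of_posSemidef_sub hl.le (A := A n) (by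
      rw [hA n, add_sub_cancel_right]
      exact (posSemidef_transpose_mul_self (X n)).smul (by norm_num))
  have hδpos (n : ℕ) : 0 < δ n := by
    rw [hδ n]
    have := (pow_pos hl p).trans_le (hdet n)
    positivity
  have hδle (n : ℕ) : δ n ≤ (2 : ℝ) ^ (-(n : ℝ)) * exp (-(n : ℝ) / 4) := by
    rw [hδ n]
    calc _ ≤ 1 * (2 : ℝ) ^ (-(n : ℝ)) * exp (-(n : ℝ) / 4) := by
          gcongr
          · exact rpow_div_two_mul_rpow_neg_half_le_one hl (hdet n)
          · have : 0 ≤ 1 / (4 * l) * ∑ i, ((X n) *ᵥ (S n *ᵥ ((X n)ᵀ *ᵥ Yt n))) i ^ 2 := by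
              positivity
            linarith
      _ = _ := by ring
  have hδ0 : Tendsto δ atTop (nhds 0) := by
    refine squeeze_zero (fun n => (hδpos n).le)
      (fun n => (hδle n).trans_eq (two_rpow_neg_mul_exp_neg_div_four n)) ?_
    exact tendsto_inv_atTop_zero.comp (tendsto_pow_atTop_atTop_of_one_lt (by
      linarith [one_le_exp (by norm_num : (0 : ℝ) ≤ 1 / 4)]))
  refine ⟨hdet, hδle, by simpa using tendsto_const_nhds.sub hδ0, fun c hc hc1 => ?_⟩
  obtain ⟨N, hN⟩ := eventually_atTop.1 (hδ0.eventually (ge_mem_nhds (sub_pos.2 hc1)))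
  refine ⟨N, fun n hn => ?_⟩
  rw [← inv_div M ε, log_inv]
  refine mul_le_neg_div_log_one_sub hc (hδpos n) (hN n hn)
    (log_nonneg ((one_le_div hε).2 hεM.le)) (by positivity) ?_
  calc _ ≤ (2 * exp (1 / 4)) ^ n * ((2 * exp (1 / 4)) ^ n)⁻¹ := by
        gcongr
        exact (hδle n).trans_eq (two_rpow_neg_mul_exp_neg_div_four n)
    _ = 1 := mul_inv_cancel₀ (by positivity)

/-- Choi–Hobert upper bound for the logistic regression Gibbs sampler.
With `A_n = ½ XₙᵀXₙ + λI_p`, `S_n = A_n^{-1/2}` (a symmetric square root of `A_n⁻¹`), and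
`δ_n = λ^{p/2} (det A_n)^{-1/2} 2^{-n} exp(-n/4 - (1/(4λ))‖Xₙ Aₙ^{-1/2} Xₙᵀ Ỹₙ‖²)`:
`det A_n ≥ λ^p`, hence `δ_n ≤ 2^{-n} e^{-n/4}`, so for fixed `p` the bound
`r̃_n = 1 - δ_n → 1` (exponentially fast) as `n → ∞`; moreover the iteration count
`K_{n,ε} = log(ε/M)/log(1-δ_n)` satisfies `K_{n,ε} ≥ c (2e^{1/4})^n log(M/ε)`
for any `c < 1` and all sufficiently large `n`. -/
theorem choi_hobert_bound_degenerates
    (p : ℕ) (l : ℝ) (hl : 0 < l) (M ε : ℝ) (hε : 0 < ε) (hεM : ε < M)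
    (X : (n : ℕ) → Matrix (Fin n) (Fin p) ℝ)
    (Yt : (n : ℕ) → Fin n → ℝ)
    (S : (n : ℕ) → Matrix (Fin p) (Fin p) ℝ)
    (A : (n : ℕ) → Matrix (Fin p) (Fin p) ℝ)
    (hA : ∀ n, A n = (1 / 2 : ℝ) • ((X n)ᵀ * X n) + l • (1 : Matrix (Fin p) (Fin p) ℝ))
    (hS : ∀ n, S n * S n = (A n)⁻¹ ∧ (S n)ᵀ = S n)
    (δ : ℕ → ℝ)
    (hδ : ∀ n, δ n = l ^ ((p : ℝ) / 2) * ((A n).det) ^ (-(1 / 2) : ℝ) *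
      (2 : ℝ) ^ (-(n : ℝ)) *
      Real.exp (-(n : ℝ) / 4 -
        (1 / (4 * l)) * ∑ i, ((X n) *ᵥ (S n *ᵥ ((X n)ᵀ *ᵥ Yt n))) i ^ 2)) :
    (∀ n, l ^ p ≤ (A n).det) ∧
    (∀ n, δ n ≤ (2 : ℝ) ^ (-(n : ℝ)) * Real.exp (-(n : ℝ) / 4)) ∧
    Tendsto (fun n => 1 - δ n) atTop (nhds 1) ∧
    (∀ c : ℝ, 0 < c → c < 1 → ∃ N : ℕ, ∀ n ≥ N,
      c * (2 * Real.exp (1 / 4)) ^ n * Real.log (M / ε)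
        ≤ Real.log (ε / M) / Real.log (1 - δ n)) :=
  choi_hobert_bound_degenerates_general p l hl M ε hε hεM X Yt S A hA δ hδ
end
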